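/- arXiv:1909.13230 — 3 statements merged into one kernel-verified Lean document; each statement's English description precedes it below -/
import Mathlib

section
/- Assume π(x) ≥ x/ln x for x ≥ 17 and π(x) ≤ 1.2551·x/ln x for x > 1. Then for every even number E ≥ 131, one has d_E < a_E, where d_E and a_E are the counts of prime-prime and nonprime-nonprime additive interactions of E (half-counted on the diagonal). -/
/-- The additive interactions of an even number `E`: pairs of odd positive
integers `x ≤ y` with `x + y = E`. -/
def interactions (E : ℕ) : Finset (ℕ × ℕ) :=
  (Finset.range (E + 1) ×ˢ Finset.range (E + 1)).filter
    (fun p => 0 < p.1 ∧ Odd p.1 ∧ Odd p.2 ∧ p.1 ≤ p.2 ∧ p.1 + p.2 = E)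

/-- `a_E`: interactions with both entries nonprime, diagonal half-weighted. -/
def aE (E : ℕ) : ℚ :=
  ((interactions E).filter (fun p => p.1 ≠ p.2 ∧ ¬ p.1.Prime ∧ ¬ p.2.Prime)).card
    + (1 / 2 : ℚ) * ((interactions E).filter (fun p => p.1 = p.2 ∧ ¬ p.1.Prime)).card

/-- `b_E`: interactions with first entry nonprime, second prime. -/
def bE (E : ℕ) : ℚ :=
  ((interactions E).filter (fun p => ¬ p.1.Prime ∧ p.2.Prime)).card

/-- `c_E`: interactions with first entry prime, second nonprime. -/
def cE (E : ℕ) : ℚ :=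
  ((interactions E).filter (fun p => p.1.Prime ∧ ¬ p.2.Prime)).card

/-- `d_E`: interactions with both entries prime, diagonal half-weighted. -/
def dE (E : ℕ) : ℚ :=
  ((interactions E).filter (fun p => p.1 ≠ p.2 ∧ p.1.Prime ∧ p.2.Prime)).card
    + (1 / 2 : ℚ) * ((interactions E).filter (fun p => p.1 = p.2 ∧ p.1.Prime)).card

/-!
Folding each odd `y < E` to the interaction `(min y (E - y), max y (E - y))` hits every
off-diagonal interaction twice and the diagonal one once. Counting the odd primes and the odd
nonprimes below `E` in this way gives `b + c + 2d = π(E) - 1` and `b + c + 2a = E/2 - π(E) + 1`,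
so `2(a - d) = E/2 + 2 - 2π(E)`, which is positive as soon as `4π(E) < E + 4`. Dusart's upper
bound gives this for `E ≥ 132`, using `log E ≥ 7 log 2 + 1 - 128/E`.
-/

open Finset

lemma mem_interactions {E : ℕ} {p : ℕ × ℕ} :
    p ∈ interactions E ↔ 0 < p.1 ∧ Odd p.1 ∧ Odd p.2 ∧ p.1 ≤ p.2 ∧ p.1 + p.2 = E := by
  simp only [interactions, mem_filter, mem_product, mem_range]
  exact ⟨fun h => h.2, fun h => ⟨⟨by omega, by omega⟩, h⟩⟩

lemma min_max_mem_interactions {E y : ℕ} (hE : Even E) (hy : Odd y) (hyE : y < E) :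
    (min y (E - y), max y (E - y)) ∈ interactions E := by
  have hy' : Odd (E - y) := Nat.Even.sub_odd hyE.le hE hy
  rw [mem_interactions]
  rcases le_total y (E - y) with h | h
  · rw [min_eq_left h, max_eq_right h]; exact ⟨hy.pos, hy, hy', h, by omega⟩
  · rw [min_eq_right h, max_eq_left h]; exact ⟨hy'.pos, hy', hy, h, by omega⟩

lemma filter_min_max_eq_filter_pair {E : ℕ} {p : ℕ × ℕ} (hp : p ∈ interactions E)
    (h : ℕ → Prop) [DecidablePred h] :
    {y ∈ {y ∈ range E | Odd y ∧ h y} | (min y (E - y), max y (E - y)) = p}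
      = {y ∈ ({p.1, p.2} : Finset ℕ) | h y} := by
  obtain ⟨h0, h1, h2, h3, h4⟩ := mem_interactions.mp hp
  ext y
  simp only [mem_filter, mem_range, mem_insert, mem_singleton, Prod.ext_iff]
  constructor
  · rintro ⟨⟨-, -, hy⟩, hmin, hmax⟩
    exact ⟨by omega, hy⟩
  · rintro ⟨rfl | rfl, hy⟩
    · exact ⟨⟨by omega, h1, hy⟩, by omega, by omega⟩
    · exact ⟨⟨by omega, h2, hy⟩, by omega, by omega⟩

lemma card_filter_pair_eq (a b : ℕ) (h : ℕ → Prop) [DecidablePred h] :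
    #{y ∈ ({a, b} : Finset ℕ) | h y} =
      2 * (if a ≠ b ∧ h a ∧ h b then 1 else 0) + (if a = b ∧ h a then 1 else 0)
        + (if ¬ h a ∧ h b then 1 else 0) + (if h a ∧ ¬ h b then 1 else 0) := by
  rcases eq_or_ne a b with rfl | hab
  · by_cases ha : h a <;> simp [filter_singleton, ha]
  · by_cases ha : h a <;> by_cases hb : h b <;> simp [filter_insert, filter_singleton, ha, hb, hab]

theorem card_odd_lt_eq_interactions (E : ℕ) (hE : Even E) (h : ℕ → Prop) [DecidablePred h] :
    #{y ∈ range E | Odd y ∧ h y} =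
      2 * #{p ∈ interactions E | p.1 ≠ p.2 ∧ h p.1 ∧ h p.2}
        + #{p ∈ interactions E | p.1 = p.2 ∧ h p.1}
        + #{p ∈ interactions E | ¬ h p.1 ∧ h p.2}
        + #{p ∈ interactions E | h p.1 ∧ ¬ h p.2} := by
  rw [card_eq_sum_card_fiberwise (f := fun y => (min y (E - y), max y (E - y)))
    (t := interactions E) fun y hy => by
      simp only [coe_filter, mem_range, Set.mem_ofPred_eq] at hy
      exact min_max_mem_interactions hE hy.2.1 hy.1]
  rw [sum_congr rfl fun p hp => by rw [filter_min_max_eq_filter_pair hp, card_filter_pair_eq]]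
  simp only [card_filter, mul_sum, sum_add_distrib]

theorem card_odd_lt (n : ℕ) : #{y ∈ range n | Odd y} = n / 2 := by
  induction n with
  | zero => rfl
  | succ n ih =>
    rw [range_add_one, filter_insert]
    split_ifs with h
    · rw [card_insert_of_notMem (by simp), ih]
      rw [Nat.odd_iff] at h; omega
    · rw [ih]
      rw [Nat.odd_iff] at h; omega

theorem card_odd_prime_lt_add_one {E : ℕ} (hE : Even E) (h2 : 2 ≤ E) :
    #{y ∈ range E | Odd y ∧ y.Prime} + 1 = Nat.primeCounting E := by
  have hprimes : Nat.primesLE E = insert 2 {y ∈ range E | Odd y ∧ y.Prime} := by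
    ext y
    simp only [Nat.mem_primesLE, mem_insert, mem_filter, mem_range]
    constructor
    · rintro ⟨hyE, hy⟩
      refine hy.eq_two_or_odd'.imp_right fun hodd => ⟨?_, hodd, hy⟩
      exact lt_of_le_of_ne hyE fun h => (Nat.not_even_iff_odd.mpr hodd) (h ▸ hE)
    · rintro (rfl | ⟨hyE, -, hy⟩)
      · exact ⟨h2, Nat.prime_two⟩
      · exact ⟨hyE.le, hy⟩
  rw [← Nat.primesLE_card_eq_primeCounting, hprimes, card_insert_of_notMem (by simp)]

theorem card_odd_not_prime_lt_add_card_odd_prime_lt (E : ℕ) :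
    #{y ∈ range E | Odd y ∧ ¬ y.Prime} + #{y ∈ range E | Odd y ∧ y.Prime} = E / 2 := by
  rw [← card_odd_lt E, ← card_filter_add_card_filter_not (s := {y ∈ range E | Odd y}) Nat.Prime,
    filter_filter, filter_filter, add_comm]

theorem bE_add_cE_add_two_mul_dE {E : ℕ} (hE : Even E) (h2 : 2 ≤ E) :
    bE E + cE E + 2 * dE E = Nat.primeCounting E - 1 := by
  have hcount := card_odd_lt_eq_interactions E hE Nat.Prime
  rw [← card_odd_prime_lt_add_one hE h2, hcount]
  simp only [bE, cE, dE]
  push_cast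
  ring

theorem bE_add_cE_add_two_mul_aE {E : ℕ} (hE : Even E) (h2 : 2 ≤ E) :
    bE E + cE E + 2 * aE E = E / 2 - Nat.primeCounting E + 1 := by
  have hcount := card_odd_lt_eq_interactions E hE (fun y => ¬ y.Prime)
  simp only [not_not] at hcount
  have hE2 : ((E / 2 : ℕ) : ℚ) = E / 2 := Nat.cast_div_charZero (even_iff_two_dvd.mp hE)
  rw [← hE2, ← card_odd_not_prime_lt_add_card_odd_prime_lt, ← card_odd_prime_lt_add_one hE h2, hcount]
  simp only [bE, cE, aE]
  push_cast
  ring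

lemma seven_mul_log_two_add_one_sub_le_log {x : ℝ} (hx : 0 < x) :
    7 * Real.log 2 + (1 - 128 / x) ≤ Real.log x := by
  have h128 : Real.log 128 = 7 * Real.log 2 := by
    rw [show (128 : ℝ) = 2 ^ 7 by norm_num, Real.log_pow]; norm_num
  have := Real.one_sub_inv_le_log_of_pos (div_pos hx (by norm_num : (0 : ℝ) < 128))
  rwa [Real.log_div hx.ne' (by norm_num), inv_div, h128, le_sub_iff_add_le'] at this

theorem four_mul_primeCounting_lt
    (hπ : ∀ n : ℕ, 1 < n → (Nat.primeCounting n : ℝ) ≤ 1.2551 * n / Real.log n)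
    {E : ℕ} (hE : 132 ≤ E) : 4 * Nat.primeCounting E < E + 4 := by
  have hE' : (132 : ℝ) ≤ E := by exact_mod_cast hE
  have hlog := seven_mul_log_two_add_one_sub_le_log (by linarith : (0 : ℝ) < E)
  have hlog2 := Real.log_two_gt_d9
  have hlogE : 4.88 ≤ Real.log E := by
    have : 128 / (E : ℝ) ≤ 128 / 132 := by gcongr
    linarith
  have hElogE : 5.852 * E - 128 ≤ E * Real.log E := by
    have : (E : ℝ) * (128 / E) = 128 := by field_simp
    nlinarith
  have hreal : (Nat.primeCounting E : ℝ) < (E + 4) / 4 := by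
    refine (hπ E (by omega)).trans_lt ?_
    rw [div_lt_iff₀ (by linarith)]
    linarith
  exact_mod_cast (by linarith : (4 * Nat.primeCounting E : ℝ) < E + 4)

theorem dE_lt_aE_general
    (hπ2 : ∀ n : ℕ, 1 < n → (Nat.primeCounting n : ℝ) ≤ 1.2551 * n / Real.log n)
    (E : ℕ) (hE : Even E) (h131 : 131 ≤ E) :
    dE E < aE E := by
  have h132 : 132 ≤ E := by obtain ⟨m, rfl⟩ := hE; omega
  have hd := bE_add_cE_add_two_mul_dE hE (by omega)
  have ha := bE_add_cE_add_two_mul_aE hE (by omega)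
  have hπ : (4 * Nat.primeCounting E : ℚ) < E + 4 := by
    exact_mod_cast four_mul_primeCounting_lt hπ2 h132
  linarith

theorem dE_lt_aE
    (hπ1 : ∀ n : ℕ, 17 ≤ n → (n : ℝ) / Real.log n ≤ (Nat.primeCounting n : ℝ))
    (hπ2 : ∀ n : ℕ, 1 < n → (Nat.primeCounting n : ℝ) ≤ 1.2551 * n / Real.log n)
    (E : ℕ) (hE : Even E) (h131 : 131 ≤ E) :
    dE E < aE E :=
  dE_lt_aE_general hπ2 E hE h131
end

section
/- Let E > 130 be an even number with S.C.E quantities a_E, b_E, c_E, d_E ≥ 0 satisfying a_E + b_E + c_E + d_E = E/4, b_E + c_E + 2d_E = π(E) − 1, and b_E + c_E + 2a_E = E/2 − π(E) + 1. Assume π(x) ≥ x/ln x for x ≥ 17 and π(x) ≤ 1.2551·x/ln x for x > 1, and that d_E = 0. Then a_E cannot equal 0, cannot lie in (0, E/4 − 1.2551·E/ln E + 1), cannot lie in (E/4 − E/ln E + 1, E/4), and cannot equal E/4 (the last using that there is an odd prime ≤ E/2). -/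
/-!
With `d = 0` the first two relations force `a = E/4 - π(E) + 1`, so each forbidden region
is a statement about `π(E)`. The two Dusart bounds exclude the open intervals directly;
`a = 0` is excluded because `1.2551 E / log E < E/4 + 1` once `E ≥ 131`, and `a = E/4`
because `2` and `3` are primes below `E`.
-/

open Real

lemma log_add_one_sub_div_le_log {x y : ℝ} (hx : 0 < x) (hy : 0 < y) :
    log y + (1 - y / x) ≤ log x := by
  have h := one_sub_inv_le_log_of_pos (div_pos hx hy)
  rw [inv_div, log_div hx.ne' hy.ne'] at h
  linarith

lemma mul_div_log_lt_div_four_add_one {x : ℝ} (hx : 131 ≤ x) :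
    1.2551 * x / log x < x / 4 + 1 := by
  have hx0 : 0 < x := by linarith
  -- compare with `log 128 = 7 log 2`, which is close enough to `log 131` to leave a margin
  have hlog : 7 * log 2 + (1 - 128 / x) ≤ log x := by
    have h128 : log 128 = 7 * log 2 := by
      rw [show (128 : ℝ) = 2 ^ 7 by norm_num, log_pow, Nat.cast_ofNat]
    simpa [h128] using log_add_one_sub_div_le_log hx0 (by norm_num : (0 : ℝ) < 128)
  have hlog2 := log_two_gt_d9
  have hfrac : 128 / x * x = 128 := div_mul_cancel₀ _ hx0.ne'
  have hsmall : 128 / x ≤ 1 := by rw [div_le_one hx0]; linarith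
  have hlogpos : 0 < log x := by linarith
  rw [div_lt_iff₀ hlogpos]
  nlinarith [mul_le_mul_of_nonneg_left hlog (by positivity : (0 : ℝ) ≤ x / 4 + 1),
    mul_le_mul_of_nonneg_left hlog2.le hx0.le, mul_le_mul_of_nonneg_left hx (sub_nonneg.2 hlog2.le)]

lemma two_le_primeCounting {n : ℕ} (hn : 3 ≤ n) : 2 ≤ Nat.primeCounting n :=
  (by decide : Nat.primeCounting 3 = 2) ▸ Nat.monotone_primeCounting hn

theorem aE_forbidden_regions_general
    (hπ1 : ∀ n : ℕ, 17 ≤ n → (n : ℝ) / Real.log n ≤ (Nat.primeCounting n : ℝ))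
    (hπ2 : ∀ n : ℕ, 1 < n → (Nat.primeCounting n : ℝ) ≤ 1.2551 * n / Real.log n)
    (E : ℕ) (h130 : 130 < E)
    (a b c d : ℝ)
    (hsum : a + b + c + d = (E : ℝ) / 4)
    (hD : b + c + 2 * d = (Nat.primeCounting E : ℝ) - 1)
    (hd0 : d = 0) :
    a ≠ 0 ∧
    ¬ (0 < a ∧ a < (E : ℝ) / 4 - 1.2551 * E / Real.log E + 1) ∧
    ¬ ((E : ℝ) / 4 - (E : ℝ) / Real.log E + 1 < a ∧ a < (E : ℝ) / 4) ∧
    a ≠ (E : ℝ) / 4 := by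
  have ha : a = (E : ℝ) / 4 - Nat.primeCounting E + 1 := by subst hd0; linarith
  have hupper := hπ2 E (by omega)
  have hlower := hπ1 E (by omega)
  have hkey := mul_div_log_lt_div_four_add_one (x := E) (by exact_mod_cast h130)
  have htwo : (2 : ℝ) ≤ Nat.primeCounting E := by exact_mod_cast two_le_primeCounting (by omega)
  refine ⟨?_, ?_, ?_, ?_⟩
  · intro h; linarith
  · rintro ⟨-, h⟩; linarith
  · rintro ⟨h, -⟩; linarith
  · intro h; linarith

theorem aE_forbidden_regions
    (hπ1 : ∀ n : ℕ, 17 ≤ n → (n : ℝ) / Real.log n ≤ (Nat.primeCounting n : ℝ))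
    (hπ2 : ∀ n : ℕ, 1 < n → (Nat.primeCounting n : ℝ) ≤ 1.2551 * n / Real.log n)
    (E : ℕ) (hE : Even E) (h130 : 130 < E)
    (a b c d : ℝ) (ha : 0 ≤ a) (hb : 0 ≤ b) (hc : 0 ≤ c) (hd : 0 ≤ d)
    (hsum : a + b + c + d = (E : ℝ) / 4)
    (hD : b + c + 2 * d = (Nat.primeCounting E : ℝ) - 1)
    (hA : b + c + 2 * a = (E : ℝ) / 2 - (Nat.primeCounting E : ℝ) + 1)
    (hp : ∃ p : ℕ, p.Prime ∧ Odd p ∧ (p : ℝ) ≤ (E : ℝ) / 2)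
    (hd0 : d = 0) :
    a ≠ 0 ∧
    ¬ (0 < a ∧ a < (E : ℝ) / 4 - 1.2551 * E / Real.log E + 1) ∧
    ¬ ((E : ℝ) / 4 - (E : ℝ) / Real.log E + 1 < a ∧ a < (E : ℝ) / 4) ∧
    a ≠ (E : ℝ) / 4 :=
  aE_forbidden_regions_general hπ1 hπ2 E h130 a b c d hsum hD hd0
end

section
/- Assuming x/ln x ≤ π(x) ≤ 1.2551·x/ln x for x ≥ 17, for every even number E ≥ 2526 the identity b_E + d_E = R₂(E) (the number of odd primes in (E/2, E)) together with R₂(E) ≥ E/ln E − 1.2551·(E/2)/ln(E/2) > 0 shows that b_E and d_E cannot both vanish. -/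
theorem bE_dE_not_both_zero
    (hπ1 : ∀ n : ℕ, 17 ≤ n → (n : ℝ) / Real.log n ≤ (Nat.primeCounting n : ℝ))
    (hπ2 : ∀ n : ℕ, 17 ≤ n → (Nat.primeCounting n : ℝ) ≤ 1.2551 * n / Real.log n)
    (E : ℕ) (hE : Even E) (h34 : 34 < E) (h2526 : 2526 ≤ E) :
    ¬ (bE E = 0 ∧ dE E = 0) := by
  rintro ⟨hb, hd⟩
  obtain ⟨n, rfl⟩ := hE
  have hn : 17 ≤ n := by omega
  obtain ⟨p, hp, hnp, hp2n⟩ := Nat.exists_prime_lt_and_le_two_mul n (by omega)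
  have hpE : p < n + n := by
    rcases lt_or_eq_of_le (by omega : p ≤ n + n) with h | h
    · exact h
    · exfalso
      have : (2 : ℕ) ∣ p := ⟨n, by omega⟩
      have := (Nat.Prime.eq_one_or_self_of_dvd hp 2 this).resolve_left (by norm_num)
      omega
  have hpodd : Odd p := hp.odd_of_ne_two (by omega)
  set x := n + n - p with hx
  have hxodd : Odd x := Nat.Even.sub_odd (by omega) ⟨n, rfl⟩ hpodd
  have hmem : (x, p) ∈ interactions (n + n) := by
    simp only [interactions, Finset.mem_filter, Finset.mem_product, Finset.mem_range]
    refine ⟨⟨by omega, by omega⟩, by omega, hxodd, hpodd, by omega, by omega⟩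
  by_cases hxp : x.Prime
  · -- contributes to dE
    have hmem2 : (x, p) ∈ (interactions (n + n)).filter
        (fun q => q.1 ≠ q.2 ∧ q.1.Prime ∧ q.2.Prime) := by
      refine Finset.mem_filter.mpr ⟨hmem, ?_, hxp, hp⟩
      simp only []
      omega
    have hpos : 0 < ((interactions (n + n)).filter
        (fun q => q.1 ≠ q.2 ∧ q.1.Prime ∧ q.2.Prime)).card :=
      Finset.card_pos.mpr ⟨_, hmem2⟩
    unfold dE at hd
    have h1 : (0 : ℚ) ≤ (((interactions (n + n)).filter
        (fun q => q.1 = q.2 ∧ q.1.Prime)).card : ℚ) := by positivity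
    have h2 : (1 : ℚ) ≤ (((interactions (n + n)).filter
        (fun q => q.1 ≠ q.2 ∧ q.1.Prime ∧ q.2.Prime)).card : ℚ) := by
      exact_mod_cast hpos
    linarith
  · -- contributes to bE
    have hmem2 : (x, p) ∈ (interactions (n + n)).filter
        (fun q => ¬ q.1.Prime ∧ q.2.Prime) :=
      Finset.mem_filter.mpr ⟨hmem, hxp, hp⟩
    have hpos : 0 < ((interactions (n + n)).filter
        (fun q => ¬ q.1.Prime ∧ q.2.Prime)).card :=
      Finset.card_pos.mpr ⟨_, hmem2⟩
    unfold bE at hb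
    rw [Nat.cast_eq_zero] at hb
    omega
end
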